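/- arXiv:1011.3986 — 3 statements merged into one kernel-verified Lean document; each statement's English description precedes it below -/
import Mathlib

section
/- Let m ≥ 3 be an odd integer. Every ℝ-linear map A : ℍ → ℍ that commutes with every element of G₁(m) is a real scalar multiple of the identity; that is, the natural action of G₁(m) on ℝ⁴ is absolutely irreducible. -/
noncomputable section

open Quaternion Real

/-- The quaternion `i`. -/
def qi : Quaternion ℝ := ⟨0, 1, 0, 0⟩
/-- The quaternion `j`. -/
def qj : Quaternion ℝ := ⟨0, 0, 1, 0⟩
/-- The quaternion `k`. -/
def qk : Quaternion ℝ := ⟨0, 0, 0, 1⟩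
/-- The unit quaternion `e_s = cos(π/s) + sin(π/s) i`. -/
def es (s : ℕ) : Quaternion ℝ := ⟨Real.cos (Real.pi / s), Real.sin (Real.pi / s), 0, 0⟩

lemma norm_eq_one_of_normSq {a : Quaternion ℝ} (h : Quaternion.normSq a = 1) : ‖a‖ = 1 := by
  have h2 : ‖a‖ * ‖a‖ = 1 := by rw [← Quaternion.normSq_eq_norm_mul_self, h]
  rcases mul_self_eq_one_iff.1 h2 with h' | h'
  · exact h'
  · nlinarith [norm_nonneg a]

lemma norm_qi : ‖qi‖ = 1 := norm_eq_one_of_normSq (by rw [Quaternion.normSq_def']; simp [qi])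
lemma norm_qj : ‖qj‖ = 1 := norm_eq_one_of_normSq (by rw [Quaternion.normSq_def']; simp [qj])
lemma norm_qk : ‖qk‖ = 1 := norm_eq_one_of_normSq (by rw [Quaternion.normSq_def']; simp [qk])
lemma norm_es (s : ℕ) : ‖es s‖ = 1 :=
  norm_eq_one_of_normSq (by
    rw [Quaternion.normSq_def']
    simp [es, Real.sin_sq_add_cos_sq, Real.cos_sq_add_sin_sq])

lemma self_mul_star_of_norm_one {a : Quaternion ℝ} (h : ‖a‖ = 1) : a * star a = 1 := by
  rw [Quaternion.self_mul_star]
  have h1 : Quaternion.normSq a = 1 := by rw [Quaternion.normSq_eq_norm_mul_self, h, mul_one]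
  rw [h1]; norm_num

lemma star_mul_self_of_norm_one {a : Quaternion ℝ} (h : ‖a‖ = 1) : star a * a = 1 := by
  rw [Quaternion.star_mul_self]
  have h1 : Quaternion.normSq a = 1 := by rw [Quaternion.normSq_eq_norm_mul_self, h, mul_one]
  rw [h1]; norm_num

/-- The rotation `[l,r] : x ↦ l̄ x r` of `ℝ⁴ ≅ ℍ`, for unit quaternions `l, r`. -/
def qrot (l r : Quaternion ℝ) (hl : ‖l‖ = 1) (hr : ‖r‖ = 1) :
    Quaternion ℝ ≃ₗ[ℝ] Quaternion ℝ where
  toFun x := star l * x * r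
  invFun x := l * x * star r
  map_add' x y := by noncomm_ring
  map_smul' c x := by simp [mul_smul_comm, smul_mul_assoc]
  left_inv x := by
    have h : l * (star l * x * r) * star r = (l * star l) * x * (r * star r) := by noncomm_ring
    simp [h, self_mul_star_of_norm_one hl, self_mul_star_of_norm_one hr]
  right_inv x := by
    have h : star l * (l * x * star r) * r = (star l * l) * x * (star r * r) := by noncomm_ring
    simp [h, star_mul_self_of_norm_one hl, star_mul_self_of_norm_one hr]

/-- The group `G₁(m)`. -/
def G1 (m : ℕ) : Subgroup (Quaternion ℝ ≃ₗ[ℝ] Quaternion ℝ) :=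
  Subgroup.closure
    {qrot (es m) 1 (norm_es m) norm_one,
     qrot 1 qi norm_one norm_qi,
     qrot 1 qj norm_one norm_qj,
     qrot qj (es 4) norm_qj (norm_es 4)}

/-- The group `G₂(m)`. -/
def G2 (m : ℕ) : Subgroup (Quaternion ℝ ≃ₗ[ℝ] Quaternion ℝ) :=
  Subgroup.closure
    {qrot (es m) 1 (norm_es m) norm_one,
     qrot 1 qi norm_one norm_qi,
     qrot (es (2 * m)) qj (norm_es (2 * m)) norm_qj,
     qrot qj (es 4) norm_qj (norm_es 4)}

/-- The group `G₃(m)`. -/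
def G3 (m : ℕ) : Subgroup (Quaternion ℝ ≃ₗ[ℝ] Quaternion ℝ) :=
  Subgroup.closure
    {qrot (es m) 1 (norm_es m) norm_one,
     qrot 1 qi norm_one norm_qi,
     qrot qj 1 norm_qj norm_one,
     qrot 1 qj norm_one norm_qj}

/-- The group `F₁(m)`. -/
def F1 (m : ℕ) : Subgroup (Quaternion ℝ ≃ₗ[ℝ] Quaternion ℝ) :=
  Subgroup.closure
    {qrot (es m) qi (norm_es m) norm_qi,
     qrot 1 qj norm_one norm_qj}

/-! Commuting with `[1, i]` and `[1, j]` means that `A` commutes with right multiplication by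
`i` and `j`; these generate `ℍ`, so `A x = c * x` with `c = A 1`. Commuting with `[e_m, 1]` and
`[j, e₄]` then makes `c` commute with `e_m` and with `j`, hence, as `sin (π / m) ≠ 0`, with `i`
and `j`, so `c` lies in the centre `ℝ` of `ℍ`. -/

theorem LinearMap.apply_eq_apply_one_mul_of_adjoin_eq_top {R B : Type*} [CommSemiring R]
    [Semiring B] [Algebra R B] (f : B →ₗ[R] B) {S : Set B} (hS : Algebra.adjoin R S = ⊤)
    (hf : ∀ s ∈ S, ∀ x, f (x * s) = f x * s) (x : B) : f x = f 1 * x := by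
  have hx : x ∈ Algebra.adjoin R S := hS ▸ Algebra.mem_top
  suffices ∀ y, f (y * x) = f y * x by simpa using this 1
  induction hx using Algebra.adjoin_induction with
  | mem s hs => exact hf s hs
  | algebraMap r => intro y; simp [← Algebra.commutes r, ← Algebra.smul_def]
  | add a b _ _ ha hb => intro y; simp [mul_add, ha, hb]
  | mul a b _ _ ha hb => intro y; rw [← mul_assoc, hb, ha, mul_assoc]

lemma Real.sin_pi_div_natCast_pos {n : ℕ} (hn : 2 ≤ n) : 0 < Real.sin (π / n) := by
  have hn' : (2 : ℝ) ≤ n := by exact_mod_cast hn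
  exact Real.sin_pos_of_pos_of_lt_pi (by positivity) (div_lt_self Real.pi_pos (by linarith))

namespace Quaternion

@[simp] lemma qi_re : qi.re = 0 := rfl
@[simp] lemma qi_imI : qi.imI = 1 := rfl
@[simp] lemma qi_imJ : qi.imJ = 0 := rfl
@[simp] lemma qi_imK : qi.imK = 0 := rfl
@[simp] lemma qj_re : qj.re = 0 := rfl
@[simp] lemma qj_imI : qj.imI = 0 := rfl
@[simp] lemma qj_imJ : qj.imJ = 1 := rfl
@[simp] lemma qj_imK : qj.imK = 0 := rfl

lemma es_eq (s : ℕ) : es s = (Real.cos (π / s) : ℍ[ℝ]) + Real.sin (π / s) • qi := by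
  ext <;> simp [es]

lemma eq_re_add_imI_add_imJ_add_imK (x : ℍ[ℝ]) :
    x = (x.re : ℍ[ℝ]) + x.imI • qi + x.imJ • qj + x.imK • (qi * qj) := by
  ext <;> simp

theorem adjoin_qi_qj : Algebra.adjoin ℝ {qi, qj} = (⊤ : Subalgebra ℝ ℍ[ℝ]) := by
  refine eq_top_iff.2 fun x _ => ?_
  have hi : qi ∈ Algebra.adjoin ℝ {qi, qj} := Algebra.subset_adjoin (by simp)
  have hj : qj ∈ Algebra.adjoin ℝ {qi, qj} := Algebra.subset_adjoin (by simp)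
  rw [eq_re_add_imI_add_imJ_add_imK x]
  refine add_mem (add_mem (add_mem (Subalgebra.algebraMap_mem _ x.re) ?_) ?_) ?_ <;>
    apply Subalgebra.smul_mem
  exacts [hi, hj, mul_mem hi hj]

theorem eq_re_of_commute_qi_of_commute_qj {c : ℍ[ℝ]} (hi : Commute c qi) (hj : Commute c qj) :
    c = c.re := by
  simp only [commute_iff_eq, Quaternion.ext_iff, re_mul, imI_mul, imJ_mul, imK_mul, qi_re, qi_imI,
    qi_imJ, qi_imK, qj_re, qj_imI, qj_imJ, qj_imK] at hi hj
  ext <;> simp only [re_coe, imI_coe, imJ_coe, imK_coe] <;> linarith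

lemma commute_qi_of_commute_es {c : ℍ[ℝ]} {s : ℕ} (hs : Real.sin (π / s) ≠ 0)
    (h : Commute c (es s)) : Commute c qi := by
  rw [es_eq] at h
  have hsub := h.sub_right (coe_commute (Real.cos (π / s)) c).symm
  rwa [add_sub_cancel_left, Commute.smul_right_iff₀ hs] at hsub

lemma commute_star_right_iff {R : Type*} [CommRing R] {c q : ℍ[R]} :
    Commute c (star q) ↔ Commute c q := by
  rw [star_eq_two_re_sub]
  refine ⟨fun h => ?_, fun h => (coe_commute _ c).symm.sub_right h⟩
  simpa using (coe_commute (2 * q.re) c).symm.sub_right h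

end Quaternion

open Quaternion

lemma qrot_apply (l r : ℍ[ℝ]) (hl : ‖l‖ = 1) (hr : ‖r‖ = 1) (x : ℍ[ℝ]) :
    qrot l r hl hr x = star l * x * r := rfl

lemma qrot_es_one_mem_G1 (m : ℕ) : qrot (es m) 1 (norm_es m) norm_one ∈ G1 m :=
  Subgroup.subset_closure (by simp)

lemma qrot_one_qi_mem_G1 (m : ℕ) : qrot 1 qi norm_one norm_qi ∈ G1 m :=
  Subgroup.subset_closure (by simp)

lemma qrot_one_qj_mem_G1 (m : ℕ) : qrot 1 qj norm_one norm_qj ∈ G1 m :=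
  Subgroup.subset_closure (by simp)

lemma qrot_qj_es_mem_G1 (m : ℕ) : qrot qj (es 4) norm_qj (norm_es 4) ∈ G1 m :=
  Subgroup.subset_closure (by simp)

theorem G1_absolutely_irreducible_general (m : ℕ) (hm : 3 ≤ m)
    (A : Quaternion ℝ →ₗ[ℝ] Quaternion ℝ)
    (hA : ∀ g ∈ G1 m, ∀ x : Quaternion ℝ, A (g x) = g (A x)) :
    ∃ c : ℝ, A = c • LinearMap.id := by
  have hmul : ∀ x, A x = A 1 * x := A.apply_eq_apply_one_mul_of_adjoin_eq_top adjoin_qi_qj <| by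
    rintro s (rfl | rfl) x
    · simpa [qrot_apply] using hA _ (qrot_one_qi_mem_G1 m) x
    · simpa [qrot_apply] using hA _ (qrot_one_qj_mem_G1 m) x
  have hes : Commute (A 1) (es m) := by
    have h := hA _ (qrot_es_one_mem_G1 m) 1
    simp only [qrot_apply, mul_one, hmul (star (es m))] at h
    exact commute_star_right_iff.1 h
  have hqj : Commute (A 1) qj := by
    have h := hA _ (qrot_qj_es_mem_G1 m) 1
    simp only [qrot_apply, mul_one, hmul (star qj * es 4), ← mul_assoc] at h
    exact commute_star_right_iff.1 (mul_right_cancel₀ (norm_ne_zero_iff.1 (by simp [norm_es])) h)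
  have hre := eq_re_of_commute_qi_of_commute_qj
    (commute_qi_of_commute_es (Real.sin_pi_div_natCast_pos (by omega)).ne' hes) hqj
  refine ⟨(A 1).re, LinearMap.ext fun x => ?_⟩
  rw [LinearMap.smul_apply, LinearMap.id_apply, hmul x, hre, coe_mul_eq_smul, re_coe]

/-- The natural action of `G₁(m)` on `ℝ⁴ ≅ ℍ` is absolutely irreducible: every
`ℝ`-linear map commuting with all of `G₁(m)` is a real scalar multiple of the identity. -/
theorem G1_absolutely_irreducible (m : ℕ) (hm : 3 ≤ m) (hodd : Odd m)
    (A : Quaternion ℝ →ₗ[ℝ] Quaternion ℝ)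
    (hA : ∀ g ∈ G1 m, ∀ x : Quaternion ℝ, A (g x) = g (A x)) :
    ∃ c : ℝ, A = c • LinearMap.id :=
  G1_absolutely_irreducible_general m hm A hA
end
end

section
/- Let m ≥ 3 be an odd integer and let r be an integer with 0 < r < 4m. If a quaternion x satisfies ē_mʳ·x·iʳ = x (i.e. x is fixed by the r-th power of the automorphism [e_m,i]), then x = 0. In other words, no nontrivial element of the cyclic group generated by [e_m,i] fixes a nonzero vector of ℝ⁴. -/
noncomputable section

open Quaternion Real

/-! Both `e_m` and `i` lie in the copy `ℝ + ℝi` of `ℂ`. In the splitting `ℍ = ℂ ⊕ ℂj`, the map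
`x ↦ ē_mʳ x iʳ` rotates the first plane by `2π · r(m - 2) / 4m` and the second by
`-2π · r(m + 2) / 4m`. As `m` is odd, `m ∓ 2` is prime to `4m`, so for `0 < r < 4m` neither angle
is a multiple of `2π`, and a plane rotation by such an angle fixes only `0`. -/

@[simps]
def cisI (θ : ℝ) : Quaternion ℝ := ⟨cos θ, sin θ, 0, 0⟩

lemma cisI_mul_cisI (a b : ℝ) : cisI a * cisI b = cisI (a + b) := by
  ext <;> simp [cos_add, sin_add, Quaternion.re_mul, Quaternion.imI_mul]
  ring

lemma star_cisI (θ : ℝ) : star (cisI θ) = cisI (-θ) := by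
  ext <;> simp

lemma cisI_pow (θ : ℝ) (n : ℕ) : cisI θ ^ n = cisI (n * θ) := by
  induction n with
  | zero => ext <;> simp
  | succ n ih => rw [pow_succ, ih, cisI_mul_cisI]; push_cast; ring_nf

lemma es_eq_cisI (s : ℕ) : es s = cisI (π / s) := rfl

lemma qi_eq_cisI : qi = cisI (π / 2) := by
  ext <;> simp [qi]

lemma cisI_mul_mul_cisI (a b : ℝ) (x : Quaternion ℝ) :
    cisI a * x * cisI b =
      ⟨cos (a + b) * x.re - sin (a + b) * x.imI, sin (a + b) * x.re + cos (a + b) * x.imI,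
        cos (a - b) * x.imJ - sin (a - b) * x.imK, sin (a - b) * x.imJ + cos (a - b) * x.imK⟩ := by
  ext <;>
    simp [cos_add, sin_add, cos_sub, sin_sub, Quaternion.re_mul, Quaternion.imI_mul,
      Quaternion.imJ_mul, Quaternion.imK_mul] <;>
    ring

lemma eq_zero_of_rotation_fixed {θ a b : ℝ} (hθ : cos θ ≠ 1)
    (ha : cos θ * a - sin θ * b = a) (hb : sin θ * a + cos θ * b = b) : a = 0 ∧ b = 0 := by
  have hnorm : (cos θ - 1) * (a ^ 2 + b ^ 2) = 0 := by linear_combination a * ha + b * hb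
  have hsq : a ^ 2 + b ^ 2 = 0 := (mul_eq_zero.1 hnorm).resolve_left (sub_ne_zero.2 hθ)
  constructor <;> nlinarith [sq_nonneg a, sq_nonneg b]

lemma eq_zero_of_cisI_mul_mul_cisI_eq_self {a b : ℝ} {x : Quaternion ℝ}
    (hx : cisI a * x * cisI b = x) (hadd : cos (a + b) ≠ 1) (hsub : cos (a - b) ≠ 1) :
    x = 0 := by
  rw [cisI_mul_mul_cisI] at hx
  obtain ⟨h₁, h₂⟩ := eq_zero_of_rotation_fixed hadd (congrArg (·.re) hx) (congrArg (·.imI) hx)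
  obtain ⟨h₃, h₄⟩ := eq_zero_of_rotation_fixed hsub (congrArg (·.imJ) hx) (congrArg (·.imK) hx)
  ext <;> assumption

lemma Int.isCoprime_four_mul_add {m d : ℤ} (hm : Odd m) (hd : Even d) (hmd : IsCoprime m d) :
    IsCoprime (4 * m) (m + d) := by
  have h₂ : IsCoprime 2 (m + d) := Int.isCoprime_two_left.2 (hm.add_even hd)
  have h₄ : IsCoprime 4 (m + d) := by simpa using h₂.pow_left (m := 2)
  exact h₄.mul_left (by simpa using hmd.mul_add_left_right 1)

lemma Real.cos_two_pi_mul_div_ne_one {N k r : ℤ} (hNk : IsCoprime N k)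
    (hr₀ : 0 < r) (hrN : r < N) : cos (2 * π * (r * k) / N) ≠ 1 := by
  intro hcos
  obtain ⟨n, hn⟩ := (cos_eq_one_iff _).1 hcos
  have hN : (N : ℝ) ≠ 0 := by exact_mod_cast (hr₀.trans hrN).ne'
  have hnN : n * N = r * k := by
    field_simp at hn
    exact_mod_cast hn
  exact (Int.le_of_dvd hr₀ (hNk.dvd_of_dvd_mul_right ⟨n, by linarith⟩)).not_gt hrN

theorem powers_of_em_i_fix_only_zero_general (m : ℕ) (hodd : Odd m)
    (r : ℕ) (hr0 : 0 < r) (hr : r < 4 * m) (x : Quaternion ℝ)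
    (hx : star (es m ^ r) * x * qi ^ r = x) : x = 0 := by
  rw [es_eq_cisI, qi_eq_cisI, star_pow, star_cisI, cisI_pow, cisI_pow] at hx
  have hm : Odd (m : ℤ) := by exact_mod_cast hodd
  have hm₀ : (m : ℝ) ≠ 0 := by exact_mod_cast hodd.pos.ne'
  have hr₀ : (0 : ℤ) < r := by exact_mod_cast hr0
  have hr' : (r : ℤ) < 4 * m := by exact_mod_cast hr
  have hcop_sub : IsCoprime (4 * (m : ℤ)) (m + -2) :=
    Int.isCoprime_four_mul_add hm (by decide) (Int.isCoprime_two_right.2 hm).neg_right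
  have hcop_add : IsCoprime (4 * (m : ℤ)) (m + 2) :=
    Int.isCoprime_four_mul_add hm (by decide) (Int.isCoprime_two_right.2 hm)
  refine eq_zero_of_cisI_mul_mul_cisI_eq_self hx ?_ ?_
  · convert Real.cos_two_pi_mul_div_ne_one hcop_sub hr₀ hr' using 2
    push_cast
    field_simp
    ring
  · rw [← cos_neg]
    convert Real.cos_two_pi_mul_div_ne_one hcop_add hr₀ hr' using 2
    push_cast
    field_simp
    ring

/-- No nontrivial power of `[e_m, i]` fixes a nonzero quaternion: if `0 < r < 4m`
and `ē_mʳ x iʳ = x` then `x = 0`. -/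
theorem powers_of_em_i_fix_only_zero (m : ℕ) (hm : 3 ≤ m) (hodd : Odd m)
    (r : ℕ) (hr0 : 0 < r) (hr : r < 4 * m) (x : Quaternion ℝ)
    (hx : star (es m ^ r) * x * qi ^ r = x) : x = 0 :=
  powers_of_em_i_fix_only_zero_general m hodd r hr0 hr x hx
end
end

section
/- Let m ≥ 3 be an odd integer. For every nonzero quaternion x, the isotropy (stabilizer) subgroup {g ∈ G₁(m) : g·x = x} has at most two elements. There exists a nonzero x whose stabilizer has exactly two elements. Moreover, whenever the stabilizer of a nonzero x has two elements with nontrivial element σ, the fixed-point space {y ∈ ℍ : σ·y = y} is a two-dimensional real subspace of ℍ ≅ ℝ⁴. -/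
noncomputable section

open Quaternion Real

/-!
Every element of `G₁(m)` acts as `y ↦ l̄ y r` with `l = jⁿ e_mᵃ`, `r = jᵏ e₄ᵇ` and `n ≡ b (mod 2)`,
and `n mod 2` is additive under composition. If such an element fixes `x ≠ 0`, then
`x r x⁻¹ = l`. For even `n`, `r` lies in `{±1, ±i, ±j, ±k}`, so `r²` and hence `l²` is real;
as `Re l = ±cos(aπ/m) ≠ 0` for odd `m`, `l` itself is real and the element is the identity.
So two nontrivial elements `g, h` of a stabilizer have odd `n`, `g⁻¹h` has even `n`, and `g = h`.
For odd `n`, `l` is purely imaginary and the fixed space `{y | y r = l y}` is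
`{z x | z l = l z} = span {x, l x}`, which is two-dimensional.
-/

namespace Quaternion

theorem eq_coe_re_of_mul_self_eq_coe {a : ℍ[ℝ]} {t : ℝ} (ha : a.re ≠ 0) (h : a * a = t) :
    a = a.re := by
  have hI := congrArg (·.imI) h
  have hJ := congrArg (·.imJ) h
  have hK := congrArg (·.imK) h
  simp only [imI_mul, imJ_mul, imK_mul, imI_coe, imJ_coe, imK_coe] at hI hJ hK
  have h2 : 2 * a.re ≠ 0 := by simpa using ha
  ext <;> simp only [re_coe, imI_coe, imJ_coe, imK_coe]
  · exact (mul_eq_zero.mp (show 2 * a.re * a.imI = 0 by linarith)).resolve_left h2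
  · exact (mul_eq_zero.mp (show 2 * a.re * a.imJ = 0 by linarith)).resolve_left h2
  · exact (mul_eq_zero.mp (show 2 * a.re * a.imK = 0 by linarith)).resolve_left h2

theorem mem_span_one_self_of_commute {q z : ℍ[ℝ]} (hq : q.re = 0) (hq0 : q ≠ 0)
    (h : Commute z q) : z ∈ Submodule.span ℝ {1, q} := by
  have him : z.im * q = q * z.im := by
    rw [Commute, SemiconjBy, ← re_add_im z, add_mul, mul_add, coe_commutes] at h
    exact add_left_cancel h
  -- `z.im * q` is self-adjoint, hence real
  have hreal : z.im * q = ((z.im * q).re : ℍ[ℝ]) := by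
    rw [← star_eq_self, star_mul, star_eq_neg.mpr hq, star_im, neg_mul_neg, him]
  have hsq : q * q = ((-normSq q : ℝ) : ℍ[ℝ]) := by
    rw [← sq, sq_eq_neg_normSq.mpr hq, coe_neg]
  have hn : -normSq q ≠ 0 := neg_ne_zero.mpr (normSq_ne_zero.mpr hq0)
  have hz : z.im = ((z.im * q).re / -normSq q) • q := by
    have h2 : z.im * (q * q) = (z.im * q).re • q := by
      rw [← mul_assoc, hreal, coe_mul_eq_smul, re_coe]
    rw [hsq, mul_coe_eq_smul] at h2
    apply smul_right_injective _ hn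
    simp only [h2, smul_smul, mul_div_cancel₀ _ hn]
  rw [Submodule.mem_span_pair]
  refine ⟨z.re, (z.im * q).re / -normSq q, ?_⟩
  rw [← hz, ← coe_mul_eq_smul, mul_one, re_add_im]

end Quaternion

open Quaternion

section Bimul

variable {l r x : ℍ[ℝ]}

theorem star_mul_mul_eq_self_iff (hl : ‖l‖ = 1) (y : ℍ[ℝ]) :
    star l * y * r = y ↔ y * r = l * y := by
  constructor <;> intro h
  · rw [← h, ← mul_assoc, ← mul_assoc, self_mul_star_of_norm_one hl, one_mul, h]
  · rw [mul_assoc, h, ← mul_assoc, star_mul_self_of_norm_one hl, one_mul]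

theorem star_mul_mul_comp (l r l' r' y : ℍ[ℝ]) :
    star l * (star l' * y * r') * r = star (l' * l) * y * (r' * r) := by
  simp only [star_mul, mul_assoc]

theorem star_mul_mul_eq_self_of_re_ne_zero {t : ℝ} (hl : ‖l‖ = 1) (hre : l.re ≠ 0)
    (hr : r * r = t) (hx : x ≠ 0) (hfix : star l * x * r = x) (y : ℍ[ℝ]) :
    star l * y * r = y := by
  have hxr : x * r = l * x := (star_mul_mul_eq_self_iff hl x).mp hfix
  have hll : l * l = t := mul_right_cancel₀ hx <| by
    rw [mul_assoc, ← hxr, ← mul_assoc, ← hxr, mul_assoc, hr, coe_commutes]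
  have hlre : l = l.re := eq_coe_re_of_mul_self_eq_coe hre hll
  have hrl : r = l := mul_left_cancel₀ hx <| by rw [hxr, hlre, coe_commutes]
  rw [star_mul_mul_eq_self_iff hl, hrl, hlre, coe_commutes]

theorem ker_sub_id_eq_span_pair {σ : ℍ[ℝ] ≃ₗ[ℝ] ℍ[ℝ]} (hl : ‖l‖ = 1) (hre : l.re = 0)
    (hσ : ∀ y, σ y = star l * y * r) (hx : x ≠ 0) (hfix : σ x = x) :
    LinearMap.ker ((σ : ℍ[ℝ] →ₗ[ℝ] ℍ[ℝ]) - LinearMap.id) = Submodule.span ℝ {x, l * x} := by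
  have hmem (y : ℍ[ℝ]) :
      y ∈ LinearMap.ker ((σ : ℍ[ℝ] →ₗ[ℝ] ℍ[ℝ]) - LinearMap.id) ↔ y * r = l * y := by
    simp [sub_eq_zero, hσ, star_mul_mul_eq_self_iff hl]
  have hxr : x * r = l * x := (hmem x).mp (by simp [hfix])
  have hl0 : l ≠ 0 := by rintro rfl; simp at hl
  ext y
  rw [hmem, Submodule.mem_span_pair]
  constructor
  · intro hy
    have hc : y * x⁻¹ * l = l * (y * x⁻¹) := mul_right_cancel₀ hx <| by
      rw [mul_assoc, mul_assoc, ← hxr, ← mul_assoc x⁻¹, inv_mul_cancel₀ hx, one_mul, hy,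
        mul_assoc, mul_assoc, inv_mul_cancel₀ hx, mul_one]
    obtain ⟨α, β, hαβ⟩ := Submodule.mem_span_pair.mp (mem_span_one_self_of_commute hre hl0 hc)
    refine ⟨α, β, ?_⟩
    have hy' : y = (α • 1 + β • l) * x := by rw [hαβ, mul_assoc, inv_mul_cancel₀ hx, mul_one]
    rw [hy', add_mul, smul_mul_assoc, smul_mul_assoc, one_mul]
  · rintro ⟨α, β, rfl⟩
    simp only [add_mul, mul_add, smul_mul_assoc, mul_smul_comm, mul_assoc, hxr]

theorem linearIndependent_pair_mul_of_re_eq_zero (hre : l.re = 0) (hl0 : l ≠ 0) (hx : x ≠ 0) :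
    LinearIndependent ℝ ![x, l * x] := by
  refine (LinearIndependent.pair_iff' hx).mpr fun a ha => hl0 ?_
  have hla : l = a := mul_right_cancel₀ hx (by rw [← ha, coe_mul_eq_smul])
  rw [hla, re_coe] at hre
  rw [hla, hre, coe_zero]

theorem finrank_ker_sub_id_eq_two_of_re_eq_zero {σ : ℍ[ℝ] ≃ₗ[ℝ] ℍ[ℝ]} (hl : ‖l‖ = 1)
    (hre : l.re = 0) (hσ : ∀ y, σ y = star l * y * r) (hx : x ≠ 0) (hfix : σ x = x) :
    Module.finrank ℝ (LinearMap.ker ((σ : ℍ[ℝ] →ₗ[ℝ] ℍ[ℝ]) - LinearMap.id)) = 2 := by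
  have hl0 : l ≠ 0 := by rintro rfl; simp at hl
  rw [ker_sub_id_eq_span_pair hl hre hσ hx hfix, ← Matrix.range_cons_cons_empty _ _ ![],
    finrank_span_eq_card (linearIndependent_pair_mul_of_re_eq_zero hre hl0 hx), Fintype.card_fin]

end Bimul

def expI (θ : ℝ) : ℍ[ℝ] := ⟨cos θ, sin θ, 0, 0⟩

@[simp] theorem expI_re (θ : ℝ) : (expI θ).re = cos θ := rfl
@[simp] theorem expI_imI (θ : ℝ) : (expI θ).imI = sin θ := rfl
@[simp] theorem expI_imJ (θ : ℝ) : (expI θ).imJ = 0 := rfl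
@[simp] theorem expI_imK (θ : ℝ) : (expI θ).imK = 0 := rfl

@[simp] theorem qj_re : qj.re = 0 := rfl
@[simp] theorem qj_imI : qj.imI = 0 := rfl
@[simp] theorem qj_imJ : qj.imJ = 1 := rfl
@[simp] theorem qj_imK : qj.imK = 0 := rfl

theorem es_eq_expI (s : ℕ) : es s = expI (π / s) := rfl

theorem qi_eq_expI : qi = expI (2 * π / 4) := by
  ext <;> simp [qi, show 2 * π / 4 = π / 2 by ring]

theorem expI_zero : expI 0 = 1 := by ext <;> simp

theorem expI_mul_expI (α β : ℝ) : expI α * expI β = expI (α + β) := by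
  ext <;> simp [cos_add, sin_add]; ring

theorem star_expI (θ : ℝ) : star (expI θ) = expI (-θ) := by ext <;> simp

theorem norm_expI (θ : ℝ) : ‖expI θ‖ = 1 :=
  norm_eq_one_of_normSq (by simp [normSq_def'])

theorem expI_int_mul_pi (d : ℤ) : expI (d * π) = (cos (d * π) : ℍ[ℝ]) := by
  ext <;> simp [sin_int_mul_pi]

theorem expI_mul_qj (θ : ℝ) : expI θ * qj = qj * expI (-θ) := by ext <;> simp

theorem qj_mul_qj : qj * qj = -1 := by ext <;> simp

theorem star_qj : star qj = qj ^ 3 := by ext <;> simp [pow_succ]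

theorem qj_pow_two_mul (c : ℕ) : qj ^ (2 * c) = ((-1 : ℝ) ^ c : ℝ) := by
  rw [pow_mul, sq, qj_mul_qj, coe_pow, coe_neg, coe_one]

theorem expI_mul_qj_pow (θ : ℝ) (k : ℕ) : expI θ * qj ^ k = qj ^ k * expI ((-1) ^ k * θ) := by
  induction k generalizing θ with
  | zero => simp
  | succ k ih =>
    rw [pow_succ, ← mul_assoc, ih, mul_assoc, expI_mul_qj, ← mul_assoc, pow_succ]
    congr 2
    ring

theorem qj_pow_mul_expI_mul (n k : ℕ) (α β : ℝ) :
    qj ^ n * expI α * (qj ^ k * expI β) = qj ^ (n + k) * expI ((-1) ^ k * α + β) := by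
  rw [mul_assoc, ← mul_assoc (expI α), expI_mul_qj_pow, mul_assoc, expI_mul_expI, ← mul_assoc,
    pow_add]

theorem star_qj_pow_mul_expI (n : ℕ) (θ : ℝ) :
    star (qj ^ n * expI θ) = qj ^ (3 * n) * expI ((-1) ^ (3 * n) * -θ) := by
  rw [star_mul, star_expI, star_pow, star_qj, ← pow_mul, expI_mul_qj_pow]

theorem norm_qj_pow_mul_expI (n : ℕ) (θ : ℝ) : ‖qj ^ n * expI θ‖ = 1 := by
  rw [norm_mul, norm_pow, norm_qj, norm_expI, one_pow, one_mul]

theorem exists_qj_pow_mul_expI_mul_self_eq_coe (k : ℕ) (d : ℤ) :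
    ∃ t : ℝ, qj ^ k * expI (d * π / 2) * (qj ^ k * expI (d * π / 2)) = t := by
  rw [qj_pow_mul_expI_mul, ← two_mul, qj_pow_two_mul]
  rcases neg_one_pow_eq_or ℝ k with h | h <;> rw [h]
  · refine ⟨cos (d * π), ?_⟩
    rw [show (1 : ℝ) * (d * π / 2) + d * π / 2 = d * π by ring, expI_int_mul_pi, coe_one,
      one_mul]
  · refine ⟨-1, ?_⟩
    rw [show (-1 : ℝ) * (d * π / 2) + d * π / 2 = 0 by ring, expI_zero, mul_one]

theorem neg_one_pow_mul_modEq_two (k : ℕ) (b : ℤ) : (-1) ^ k * b ≡ b [ZMOD 2] := by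
  rcases neg_one_pow_eq_or ℤ k with h | h <;> rw [h] <;> simp only [Int.ModEq] <;> omega

theorem cos_int_mul_pi_div_ne_zero {m : ℕ} (hm : Odd m) (a : ℤ) : cos (a * π / m) ≠ 0 := by
  rw [Ne, cos_eq_zero_iff]
  rintro ⟨k, hk⟩
  have hm0 : (m : ℝ) ≠ 0 := Nat.cast_ne_zero.mpr hm.pos.ne'
  have h : ((2 * a : ℤ) : ℝ) = ((2 * k + 1) * m : ℤ) := by
    rw [div_eq_div_iff hm0 two_ne_zero] at hk
    push_cast
    exact mul_right_cancel₀ pi_ne_zero (by linear_combination hk)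
  have hodd : Odd ((2 * k + 1) * (m : ℤ)) := (odd_two_mul_add_one k).mul (by exact_mod_cast hm)
  rw [← Int.cast_inj.mp h] at hodd
  exact Int.not_even_iff_odd.mpr hodd (even_two_mul a)

def IsG1Form (m n : ℕ) (g : ℍ[ℝ] ≃ₗ[ℝ] ℍ[ℝ]) : Prop :=
  ∃ (k : ℕ) (a b : ℤ), (n : ℤ) ≡ b [ZMOD 2] ∧
    ∀ y, g y = star (qj ^ n * expI (a * π / m)) * y * (qj ^ k * expI (b * π / 4))

namespace IsG1Form

variable {m n n' : ℕ} {g h : ℍ[ℝ] ≃ₗ[ℝ] ℍ[ℝ]} {x : ℍ[ℝ]}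

theorem mul (hg : IsG1Form m n g) (hh : IsG1Form m n' h) : IsG1Form m (n' + n) (g * h) := by
  obtain ⟨k, a, b, hb, hg⟩ := hg
  obtain ⟨k', a', b', hb', hh⟩ := hh
  refine ⟨k' + k, (-1) ^ n * a' + a, (-1) ^ k * b' + b, ?_, fun y => ?_⟩
  · push_cast
    exact hb'.add hb |>.trans ((neg_one_pow_mul_modEq_two k b').symm.add_right b)
  · rw [LinearEquiv.mul_apply, hh, hg, star_mul_mul_comp, qj_pow_mul_expI_mul,
      qj_pow_mul_expI_mul]
    push_cast
    ring_nf

theorem inv (hg : IsG1Form m n g) : IsG1Form m (3 * n) g⁻¹ := by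
  obtain ⟨k, a, b, hb, hg⟩ := hg
  refine ⟨3 * k, (-1) ^ (3 * n) * -a, (-1) ^ (3 * k) * -b, ?_, fun y => ?_⟩
  · rcases neg_one_pow_eq_or ℤ (3 * k) with h | h <;> rw [h] <;> simp only [Int.ModEq] at * <;>
      push_cast <;> omega
  · have hl : qj ^ (3 * n) * expI (((-1) ^ (3 * n) * -a : ℤ) * π / m) =
        star (qj ^ n * expI (a * π / m)) := by
      rw [star_qj_pow_mul_expI]; push_cast; ring_nf
    have hr : qj ^ (3 * k) * expI (((-1) ^ (3 * k) * -b : ℤ) * π / 4) =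
        star (qj ^ k * expI (b * π / 4)) := by
      rw [star_qj_pow_mul_expI]; push_cast; ring_nf
    rw [LinearEquiv.coe_inv, LinearEquiv.symm_apply_eq, hg, hl, hr, star_mul_mul_comp,
      star_mul_self_of_norm_one (norm_qj_pow_mul_expI _ _),
      star_mul_self_of_norm_one (norm_qj_pow_mul_expI _ _), star_one, one_mul, mul_one]

theorem eq_one_of_even (hm : Odd m) (hg : IsG1Form m n g) (hn : Even n) (hx : x ≠ 0)
    (hgx : g x = x) : g = 1 := by
  obtain ⟨k, a, b, hb, hg⟩ := hg
  obtain ⟨c, rfl⟩ := hn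
  obtain ⟨d, rfl⟩ : ∃ d, b = 2 * d := ⟨b / 2, by simp only [Int.ModEq] at hb; omega⟩
  obtain ⟨t, ht⟩ := exists_qj_pow_mul_expI_mul_self_eq_coe k d
  have hre : (qj ^ (c + c) * expI (a * π / m)).re ≠ 0 := by
    rw [← two_mul, qj_pow_two_mul, coe_mul_eq_smul, re_smul, expI_re, smul_eq_mul]
    exact mul_ne_zero (pow_ne_zero _ (by norm_num)) (cos_int_mul_pi_div_ne_zero hm a)
  rw [show ((2 * d : ℤ) : ℝ) * π / 4 = d * π / 2 by push_cast; ring] at hg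
  exact LinearEquiv.ext fun y => (hg y).trans <| star_mul_mul_eq_self_of_re_ne_zero
    (norm_qj_pow_mul_expI _ _) hre ht hx ((hg x).symm.trans hgx) y

theorem finrank_ker_sub_id_of_odd (hg : IsG1Form m n g) (hn : Odd n) (hx : x ≠ 0)
    (hgx : g x = x) :
    Module.finrank ℝ (LinearMap.ker ((g : ℍ[ℝ] →ₗ[ℝ] ℍ[ℝ]) - LinearMap.id)) = 2 := by
  obtain ⟨k, a, b, -, hg⟩ := hg
  obtain ⟨c, rfl⟩ := hn
  have hre : (qj ^ (2 * c + 1) * expI (a * π / m)).re = 0 := by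
    rw [pow_succ, qj_pow_two_mul, mul_assoc, coe_mul_eq_smul, re_smul]
    simp
  exact finrank_ker_sub_id_eq_two_of_re_eq_zero (norm_qj_pow_mul_expI _ _) hre hg hx hgx

end IsG1Form

theorem isG1Form_of_mem {m : ℕ} {g : ℍ[ℝ] ≃ₗ[ℝ] ℍ[ℝ]} (hg : g ∈ G1 m) : ∃ n, IsG1Form m n g := by
  induction hg using Subgroup.closure_induction with
  | mem g hg =>
    simp only [Set.mem_insert_iff, Set.mem_singleton_iff] at hg
    rcases hg with rfl | rfl | rfl | rfl
    · exact ⟨0, 0, 1, 0, rfl, fun y => by simp [qrot, es_eq_expI, expI_zero]⟩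
    · exact ⟨0, 0, 0, 2, by decide, fun y => by simp [qrot, expI_zero, qi_eq_expI]⟩
    · exact ⟨0, 1, 0, 0, rfl, fun y => by simp [qrot, expI_zero]⟩
    · exact ⟨1, 0, 0, 1, rfl, fun y => by simp [qrot, es_eq_expI, expI_zero]⟩
  | one => exact ⟨0, 0, 0, 0, rfl, fun y => by simp [expI_zero]⟩
  | mul g h _ _ hg hh =>
    obtain ⟨n, hg⟩ := hg
    obtain ⟨n', hh⟩ := hh
    exact ⟨_, hg.mul hh⟩
  | inv g _ hg =>
    obtain ⟨n, hg⟩ := hg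
    exact ⟨_, hg.inv⟩

section Stabilizer

variable {m : ℕ} {x : ℍ[ℝ]} {g h σ : ℍ[ℝ] ≃ₗ[ℝ] ℍ[ℝ]}

theorem odd_of_isG1Form_of_fix (hm : Odd m) {n : ℕ} (hg : IsG1Form m n g) (hx : x ≠ 0)
    (hgx : g x = x) (hg1 : g ≠ 1) : Odd n :=
  Nat.not_even_iff_odd.mp fun hn => hg1 (hg.eq_one_of_even hm hn hx hgx)

theorem eq_of_mem_G1_of_fix (hm : Odd m) (hx : x ≠ 0) (hg : g ∈ G1 m) (hh : h ∈ G1 m)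
    (hgx : g x = x) (hhx : h x = x) (hg1 : g ≠ 1) (hh1 : h ≠ 1) : g = h := by
  obtain ⟨n, hgn⟩ := isG1Form_of_mem hg
  obtain ⟨n', hhn⟩ := isG1Form_of_mem hh
  have hodd := odd_of_isG1Form_of_fix hm hgn hx hgx hg1
  have hodd' := odd_of_isG1Form_of_fix hm hhn hx hhx hh1
  have hfix : (g⁻¹ * h) x = x := by
    rw [LinearEquiv.mul_apply, hhx, LinearEquiv.coe_inv, LinearEquiv.symm_apply_eq, hgx]
  exact inv_mul_eq_one.mp <|
    hgn.inv.mul hhn |>.eq_one_of_even hm (hodd'.add_odd ((by decide : Odd 3).mul hodd)) hx hfix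

theorem stabilizer_subset_pair (hm : Odd m) (hx : x ≠ 0) (hσ : σ ∈ G1 m) (hσx : σ x = x)
    (hσ1 : σ ≠ 1) : {g | g ∈ G1 m ∧ g x = x} ⊆ {1, σ} := by
  rintro g ⟨hg, hgx⟩
  by_cases hg1 : g = 1
  · exact Or.inl hg1
  · exact Or.inr (eq_of_mem_G1_of_fix hm hx hg hσ hgx hσx hg1 hσ1)

theorem finrank_ker_sub_id_of_mem_G1 (hm : Odd m) (hx : x ≠ 0) (hσ : σ ∈ G1 m)
    (hσx : σ x = x) (hσ1 : σ ≠ 1) :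
    Module.finrank ℝ (LinearMap.ker ((σ : ℍ[ℝ] →ₗ[ℝ] ℍ[ℝ]) - LinearMap.id)) = 2 := by
  obtain ⟨n, hσn⟩ := isG1Form_of_mem hσ
  exact hσn.finrank_ker_sub_id_of_odd (odd_of_isG1Form_of_fix hm hσn hx hσx hσ1) hx hσx

end Stabilizer

theorem one_add_es_four_ne_zero : 1 + es 4 ≠ 0 := by
  intro h
  have h4 := congrArg (·.re) h
  simp only [es_eq_expI, re_add, re_one, expI_re, re_zero, Nat.cast_ofNat, cos_pi_div_four] at h4
  nlinarith [sqrt_nonneg 2]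

/-- `[j, j e₄]`, written as `[j, e₄] ∘ [1, j]` to exhibit it in `G₁(m)`. -/
def sigmaFour : ℍ[ℝ] ≃ₗ[ℝ] ℍ[ℝ] := qrot qj (es 4) norm_qj (norm_es 4) * qrot 1 qj norm_one norm_qj

theorem sigmaFour_apply (y : ℍ[ℝ]) : sigmaFour y = star qj * y * qj * es 4 := by
  simp [sigmaFour, qrot, mul_assoc]

theorem sigmaFour_mem_G1 (m : ℕ) : sigmaFour ∈ G1 m :=
  Subgroup.mul_mem _ (Subgroup.subset_closure (by simp)) (Subgroup.subset_closure (by simp))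

theorem sigmaFour_apply_one_add_es_four : sigmaFour (1 + es 4) = 1 + es 4 := by
  rw [sigmaFour_apply, es_eq_expI]
  calc star qj * (1 + expI (π / (4 : ℕ))) * qj * expI (π / (4 : ℕ))
      = star qj * qj * expI (π / (4 : ℕ)) + star qj * (expI (π / (4 : ℕ)) * qj) *
          expI (π / (4 : ℕ)) := by noncomm_ring
    _ = 1 + expI (π / (4 : ℕ)) := by
      rw [expI_mul_qj, ← mul_assoc, star_mul_self_of_norm_one norm_qj, one_mul, one_mul,
        expI_mul_expI, neg_add_cancel, expI_zero, add_comm]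

theorem sigmaFour_ne_one : sigmaFour ≠ 1 := by
  intro h
  have h4 := congrArg (fun f => (f 1).imI) h
  simp [sigmaFour_apply, es_eq_expI] at h4

theorem G1_isotropy_general (m : ℕ) (hodd : Odd m) :
    (∀ x : Quaternion ℝ, x ≠ 0 → ∃ σ : Quaternion ℝ ≃ₗ[ℝ] Quaternion ℝ,
      {g : Quaternion ℝ ≃ₗ[ℝ] Quaternion ℝ | g ∈ G1 m ∧ g x = x} ⊆ {1, σ}) ∧
    (∃ x : Quaternion ℝ, x ≠ 0 ∧ ∃ σ : Quaternion ℝ ≃ₗ[ℝ] Quaternion ℝ, σ ≠ 1 ∧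
      {g : Quaternion ℝ ≃ₗ[ℝ] Quaternion ℝ | g ∈ G1 m ∧ g x = x} = {1, σ}) ∧
    (∀ x : Quaternion ℝ, x ≠ 0 → ∀ σ : Quaternion ℝ ≃ₗ[ℝ] Quaternion ℝ, σ ≠ 1 →
      {g : Quaternion ℝ ≃ₗ[ℝ] Quaternion ℝ | g ∈ G1 m ∧ g x = x} = {1, σ} →
      Module.finrank ℝ
        (LinearMap.ker ((σ : Quaternion ℝ →ₗ[ℝ] Quaternion ℝ) - LinearMap.id)) = 2) := by
  refine ⟨fun x hx => ?_, ⟨1 + es 4, one_add_es_four_ne_zero, sigmaFour, sigmaFour_ne_one, ?_⟩,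
    fun x hx σ hσ1 hstab => ?_⟩
  · by_cases h : ∃ σ, (σ ∈ G1 m ∧ σ x = x) ∧ σ ≠ 1
    · obtain ⟨σ, ⟨hσ, hσx⟩, hσ1⟩ := h
      exact ⟨σ, stabilizer_subset_pair hodd hx hσ hσx hσ1⟩
    · exact ⟨1, fun g hg => Or.inl (by_contra fun hg1 => h ⟨g, hg, hg1⟩)⟩
  · refine (stabilizer_subset_pair hodd one_add_es_four_ne_zero (sigmaFour_mem_G1 m)
      sigmaFour_apply_one_add_es_four sigmaFour_ne_one).antisymm ?_
    rintro g (rfl | rfl)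
    · exact ⟨one_mem _, rfl⟩
    · exact ⟨sigmaFour_mem_G1 m, sigmaFour_apply_one_add_es_four⟩
  · have ⟨hσ, hσx⟩ : σ ∈ G1 m ∧ σ x = x := by
      change σ ∈ {g | g ∈ G1 m ∧ g x = x}
      rw [hstab]
      exact Or.inr rfl
    exact finrank_ker_sub_id_of_mem_G1 hodd hx hσ hσx hσ1

/-- Every isotropy subgroup of a nonzero vector for `G₁(m)` has at most two
elements; some nonzero vector has a stabilizer with exactly two elements; and
whenever the stabilizer of a nonzero vector is `{1, σ}` with `σ ≠ 1`, the
fixed-point space of `σ` is two-dimensional. -/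
theorem G1_isotropy (m : ℕ) (hm : 3 ≤ m) (hodd : Odd m) :
    (∀ x : Quaternion ℝ, x ≠ 0 → ∃ σ : Quaternion ℝ ≃ₗ[ℝ] Quaternion ℝ,
      {g : Quaternion ℝ ≃ₗ[ℝ] Quaternion ℝ | g ∈ G1 m ∧ g x = x} ⊆ {1, σ}) ∧
    (∃ x : Quaternion ℝ, x ≠ 0 ∧ ∃ σ : Quaternion ℝ ≃ₗ[ℝ] Quaternion ℝ, σ ≠ 1 ∧
      {g : Quaternion ℝ ≃ₗ[ℝ] Quaternion ℝ | g ∈ G1 m ∧ g x = x} = {1, σ}) ∧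
    (∀ x : Quaternion ℝ, x ≠ 0 → ∀ σ : Quaternion ℝ ≃ₗ[ℝ] Quaternion ℝ, σ ≠ 1 →
      {g : Quaternion ℝ ≃ₗ[ℝ] Quaternion ℝ | g ∈ G1 m ∧ g x = x} = {1, σ} →
      Module.finrank ℝ
        (LinearMap.ker ((σ : Quaternion ℝ →ₗ[ℝ] Quaternion ℝ) - LinearMap.id)) = 2) :=
  G1_isotropy_general m hodd
end
end
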